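/- Let (H, ·, 1, Δ, ε, ⊲) be a left Post-Hopf algebra over a field K of characteristic zero such that Δ is cocommutative (τ ∘ Δ = Δ, where τ is the flip of the two tensor factors). Then (H, ·ᵒᵖ, 1, Δ, ε, ⊲ᵒᵖ) is a right Post-Hopf algebra, where x ·ᵒᵖ y = y·x and x ⊲ᵒᵖ y = y ⊲ x. -/
import Mathlib


open TensorProduct

/-- The raw data of a bialgebra structure on a `K`-vector space `H`: a (bilinear)
multiplication, a unit, a comultiplication and a counit. -/
structure BialgData (K H : Type*) [Field K] [AddCommGroup H] [Module K H] where
  mul : H →ₗ[K] H →ₗ[K] H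
  one : H
  comul : H →ₗ[K] H ⊗[K] H
  counit : H →ₗ[K] K

namespace BialgData

variable {K H : Type*} [Field K] [AddCommGroup H] [Module K H]

/-- `D` is a bialgebra. -/
structure IsBialgebra (D : BialgData K H) : Prop where
  mul_assoc : ∀ x y z : H, D.mul (D.mul x y) z = D.mul x (D.mul y z)
  one_mul : ∀ x : H, D.mul D.one x = x
  mul_one : ∀ x : H, D.mul x D.one = x
  coassoc : ∀ x : H,
    (TensorProduct.assoc K H H H) ((TensorProduct.map D.comul LinearMap.id) (D.comul x))
      = (TensorProduct.map LinearMap.id D.comul) (D.comul x)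
  counit_comul : ∀ x : H,
    (TensorProduct.lid K H) ((TensorProduct.map D.counit LinearMap.id) (D.comul x)) = x
  comul_counit : ∀ x : H,
    (TensorProduct.rid K H) ((TensorProduct.map LinearMap.id D.counit) (D.comul x)) = x
  comul_mul : ∀ x y : H,
    D.comul (D.mul x y) = TensorProduct.map₂ D.mul D.mul (D.comul x) (D.comul y)
  counit_mul : ∀ x y : H, D.counit (D.mul x y) = D.counit x * D.counit y
  comul_one : D.comul D.one = D.one ⊗ₜ[K] D.one
  counit_one : D.counit D.one = 1

/-- `D` is a Hopf algebra: a bialgebra admitting an antipode. -/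
structure IsHopf (D : BialgData K H) : Prop where
  isBialgebra : D.IsBialgebra
  antipode : ∃ S : H →ₗ[K] H,
    (∀ x : H, TensorProduct.lift (D.mul.compl₁₂ S LinearMap.id) (D.comul x)
        = D.counit x • D.one)
    ∧ (∀ x : H, TensorProduct.lift (D.mul.compl₁₂ LinearMap.id S) (D.comul x)
        = D.counit x • D.one)

/-- The opposite-multiplication bialgebra data. -/
def op (D : BialgData K H) : BialgData K H := { D with mul := D.mul.flip }

/-- The coopposite-comultiplication bialgebra data. -/
noncomputable def cop (D : BialgData K H) : BialgData K H :=
  { D with comul := (TensorProduct.comm K H H).toLinearMap ∘ₗ D.comul }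

/-- `(D, r)` is a right Post-Hopf algebra, with `r x y = x ⊳ y`. -/
structure IsRightPostHopf (D : BialgData K H) (r : H →ₗ[K] H →ₗ[K] H) : Prop where
  isHopf : D.IsHopf
  counit_r : ∀ x y : H, D.counit (r x y) = D.counit x * D.counit y
  comul_r : ∀ x y : H,
    D.comul (r x y) = TensorProduct.map₂ r r (D.comul x) (D.comul y)
  mul_r : ∀ x y z : H,
    r (D.mul x y) z = TensorProduct.lift (D.mul.compl₁₂ (r x) (r y)) (D.comul z)
  r_r : ∀ x y z : H,
    r (r x y) z
      = r x (TensorProduct.lift (D.mul.compl₁₂ (r y) LinearMap.id) (D.comul z))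
  conv_inv : ∃ β : H →ₗ[K] H →ₗ[K] H, ∀ x : H,
    TensorProduct.lift ((LinearMap.llcomp K H H H).compl₁₂ r.flip β) (D.comul x)
        = D.counit x • (LinearMap.id : H →ₗ[K] H)
    ∧ TensorProduct.lift ((LinearMap.llcomp K H H H).compl₁₂ β r.flip) (D.comul x)
        = D.counit x • (LinearMap.id : H →ₗ[K] H)

/-- `(D, l)` is a left Post-Hopf algebra, with `l x y = x ⊲ y`. -/
structure IsLeftPostHopf (D : BialgData K H) (l : H →ₗ[K] H →ₗ[K] H) : Prop where
  isHopf : D.IsHopf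
  counit_l : ∀ x y : H, D.counit (l x y) = D.counit x * D.counit y
  comul_l : ∀ x y : H,
    D.comul (l x y) = TensorProduct.map₂ l l (D.comul x) (D.comul y)
  l_mul : ∀ x y z : H,
    l x (D.mul y z)
      = TensorProduct.lift (D.mul.compl₁₂ (l.flip y) (l.flip z)) (D.comul x)
  l_l : ∀ x y z : H,
    l x (l y z)
      = TensorProduct.lift
          ((D.mul.compl₁₂ LinearMap.id (l.flip y)).compr₂ (l.flip z)) (D.comul x)
  conv_inv : ∃ β : H →ₗ[K] H →ₗ[K] H, ∀ x : H,
    TensorProduct.lift ((LinearMap.llcomp K H H H).compl₁₂ l β) (D.comul x)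
        = D.counit x • (LinearMap.id : H →ₗ[K] H)
    ∧ TensorProduct.lift ((LinearMap.llcomp K H H H).compl₁₂ β l) (D.comul x)
        = D.counit x • (LinearMap.id : H →ₗ[K] H)

/-- `D` is cocommutative. -/
def IsCocomm (D : BialgData K H) : Prop :=
  ∀ x : H, TensorProduct.comm K H H (D.comul x) = D.comul x

end BialgData


section Aux

variable {K H : Type*} [Field K] [AddCommGroup H] [Module K H]

private lemma lift_flip_eq {P : Type*} [AddCommGroup P] [Module K P]
    (g : H →ₗ[K] H →ₗ[K] P) (t : H ⊗[K] H) :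
    TensorProduct.lift g.flip t = TensorProduct.lift g (TensorProduct.comm K H H t) := by
  induction t using TensorProduct.induction_on with
  | zero => simp
  | tmul a b => simp
  | add s t hs ht => simp [map_add, hs, ht]

private lemma lift_cocomm {D : BialgData K H} (hcc : D.IsCocomm)
    {P : Type*} [AddCommGroup P] [Module K P]
    (g : H →ₗ[K] H →ₗ[K] P) (x : H) :
    TensorProduct.lift g.flip (D.comul x) = TensorProduct.lift g (D.comul x) := by
  rw [lift_flip_eq, hcc]

private lemma map₂_flip_flip (f g : H →ₗ[K] H →ₗ[K] H) (s t : H ⊗[K] H) :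
    TensorProduct.map₂ f.flip g.flip s t = TensorProduct.map₂ f g t s := by
  induction s using TensorProduct.induction_on with
  | zero => simp
  | tmul a b =>
    induction t using TensorProduct.induction_on with
    | zero => simp
    | tmul c d => simp [TensorProduct.map₂_apply_tmul]
    | add u v hu hv =>
      simp only [TensorProduct.map₂_apply_tmul, map_add, LinearMap.add_apply] at hu hv ⊢
      rw [hu, hv]
  | add u v hu hv => simp [map_add, hu, hv]

end Aux

/-- If `(H, ·, 1, Δ, ε, ⊲)` is a cocommutative left Post-Hopf algebra, then
`(H, ·ᵒᵖ, 1, Δ, ε, ⊲ᵒᵖ)` is a right Post-Hopf algebra, where `x ·ᵒᵖ y = y · x` and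
`x ⊲ᵒᵖ y = y ⊲ x`. -/
theorem statement3 {K H : Type*} [Field K] [CharZero K] [AddCommGroup H] [Module K H]
    (D : BialgData K H) (l : H →ₗ[K] H →ₗ[K] H)
    (hl : D.IsLeftPostHopf l) (hcc : D.IsCocomm) :
    (D.op).IsRightPostHopf l.flip := by
  obtain ⟨hHopf, counit_l, comul_l, l_mul, l_l, conv_inv⟩ := hl
  obtain ⟨hb, S, hS1, hS2⟩ := hHopf
  constructor
  · -- IsHopf of D.op
    constructor
    · constructor
      · intro x y z; exact (hb.mul_assoc z y x).symm
      · intro x; exact hb.mul_one x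
      · intro x; exact hb.one_mul x
      · exact hb.coassoc
      · exact hb.counit_comul
      · exact hb.comul_counit
      · intro x y
        show D.comul (D.mul y x) = _
        rw [hb.comul_mul, ← map₂_flip_flip]
        rfl
      · intro x y
        show D.counit (D.mul y x) = _
        rw [hb.counit_mul, mul_comm]
        rfl
      · exact hb.comul_one
      · exact hb.counit_one
    · refine ⟨S, fun x => ?_, fun x => ?_⟩
      · have he : (D.op).mul.compl₁₂ S LinearMap.id
            = (D.mul.compl₁₂ LinearMap.id S).flip := by
          ext a b; simp [BialgData.op]
        show TensorProduct.lift _ (D.comul x) = D.counit x • D.one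
        rw [he, lift_cocomm hcc, hS2 x]
      · have he : (D.op).mul.compl₁₂ LinearMap.id S
            = (D.mul.compl₁₂ S LinearMap.id).flip := by
          ext a b; simp [BialgData.op]
        show TensorProduct.lift _ (D.comul x) = D.counit x • D.one
        rw [he, lift_cocomm hcc, hS1 x]
  · intro x y
    show D.counit (l y x) = _
    rw [counit_l, mul_comm]
    rfl
  · intro x y
    show D.comul (l y x) = _
    rw [comul_l, ← map₂_flip_flip]
    rfl
  · intro x y z
    show l z (D.mul y x) = _
    rw [l_mul]
    have he : D.mul.compl₁₂ (l.flip y) (l.flip x)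
        = ((D.op).mul.compl₁₂ (l.flip x) (l.flip y)).flip := by
      ext a b; simp [BialgData.op]
    rw [he, lift_cocomm hcc]
    rfl
  · intro x y z
    show l z (l y x) = _
    rw [l_l]
    have key : ∀ t : H ⊗[K] H,
        l.flip x (TensorProduct.lift ((D.op).mul.compl₁₂ (l.flip y) LinearMap.id) t)
          = TensorProduct.lift
              (((D.op).mul.compl₁₂ (l.flip y) LinearMap.id).compr₂ (l.flip x)) t := by
      intro t
      induction t using TensorProduct.induction_on with
      | zero => simp
      | tmul a b => simp
      | add u v hu hv => simp [map_add, hu, hv]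
    show _ = l.flip x (TensorProduct.lift _ (D.comul z))
    rw [key]
    have he : (D.mul.compl₁₂ LinearMap.id (l.flip y)).compr₂ (l.flip x)
        = (((D.op).mul.compl₁₂ (l.flip y) LinearMap.id).compr₂ (l.flip x)).flip := by
      ext a b; simp [BialgData.op]
    rw [he, lift_cocomm hcc]
  · obtain ⟨β, hβ⟩ := conv_inv
    refine ⟨β, fun x => ?_⟩
    have h := hβ x
    constructor
    · show TensorProduct.lift ((LinearMap.llcomp K H H H).compl₁₂ l.flip.flip β) (D.comul x)
        = D.counit x • LinearMap.id
      rw [LinearMap.flip_flip]; exact h.1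
    · show TensorProduct.lift ((LinearMap.llcomp K H H H).compl₁₂ β l.flip.flip) (D.comul x)
        = D.counit x • LinearMap.id
      rw [LinearMap.flip_flip]; exact h.2
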